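/- For every α ∈ ℝ, the relative entropy (D_n^α) satisfies generalized additivity on the open domain: for n, m ≥ 2 and (p_{ij}), (q_{ij}) ∈ Γ_{nm}° (indexed by 1≤i≤n, 1≤j≤m), with P_i = ∑_j p_{ij} and Q_i = ∑_j q_{ij}, one has D_{nm}^α((p_{ij})|(q_{ij})) = D_n^α(P₁,…,P_n | Q₁,…,Q_n) + ∑_{i=1}^n P_i^α Q_i^(1-α) · D_m^α(p_{i1}/P_i,…,p_{im}/P_i | q_{i1}/Q_i,…,q_{im}/Q_i). -/

import Mathlib

open Finset

/-- The deformed logarithm: ln_α = ln for α = 1, otherwise (x^(1-α)-1)/(1-α). -/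
noncomputable def lnα (α x : ℝ) : ℝ :=
  if α = 1 then Real.log x else (x ^ (1 - α) - 1) / (1 - α)

/-- The relative entropy D^α(p|q) = -∑ pᵢ ln_α(qᵢ/pᵢ). -/
noncomputable def Dent (α : ℝ) {ι : Type} [Fintype ι] (p q : ι → ℝ) : ℝ :=
  -∑ i, p i * lnα α (q i / p i)

/-
Proof idea: ln_α satisfies the twisted product rule ln_α(xy) = ln_α x + x^(1-α) ln_α y.
Writing q_{ij}/p_{ij} = (Q_i/P_i) · ((q_{ij}/Q_i)/(p_{ij}/P_i)) and summing over j splits the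
i-th block of D_{nm}^α into the i-th term of D_n^α(P|Q) plus P_i (Q_i/P_i)^(1-α) = P_i^α Q_i^(1-α)
times D_m^α of the conditional distributions.
-/

lemma lnα_mul (α : ℝ) {x y : ℝ} (hx : 0 < x) (hy : 0 < y) :
    lnα α (x * y) = lnα α x + x ^ (1 - α) * lnα α y := by
  unfold lnα
  split_ifs with h
  · simp [h, Real.log_mul hx.ne' hy.ne']
  · have : (1 : ℝ) - α ≠ 0 := sub_ne_zero.mpr (Ne.symm h)
    rw [Real.mul_rpow hx.le hy.le]
    field_simp
    ring

lemma Dent_prod (α : ℝ) {ι κ : Type} [Fintype ι] [Fintype κ] (p q : ι × κ → ℝ) :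
    Dent α p q = ∑ i, Dent α (fun j => p (i, j)) (fun j => q (i, j)) := by
  simp only [Dent, Fintype.sum_prod_type, sum_neg_distrib]

lemma mul_div_rpow_one_sub {x y : ℝ} (hx : 0 < x) (hy : 0 < y) (α : ℝ) :
    x * (y / x) ^ (1 - α) = x ^ α * y ^ (1 - α) := by
  have hx' : x = x ^ α * x ^ (1 - α) := by
    rw [← Real.rpow_add hx, add_sub_cancel, Real.rpow_one]
  have hpos : 0 < x ^ (1 - α) := Real.rpow_pos_of_pos hx _
  rw [Real.div_rpow hy.le hx.le]
  nth_rewrite 1 [hx']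
  field_simp

lemma Dent_eq_add_Dent_normalize (α : ℝ) {ι : Type} [Fintype ι] [Nonempty ι] (f g : ι → ℝ)
    (hf : ∀ j, 0 < f j) (hg : ∀ j, 0 < g j) :
    Dent α f g =
      -((∑ j, f j) * lnα α ((∑ j, g j) / ∑ j, f j))
      + (∑ j, f j) ^ α * (∑ j, g j) ^ (1 - α) *
          Dent α (fun j => f j / ∑ j', f j') (fun j => g j / ∑ j', g j') := by
  set F := ∑ j, f j
  set G := ∑ j, g j
  have hF : 0 < F := sum_pos (fun j _ => hf j) univ_nonempty
  have hG : 0 < G := sum_pos (fun j _ => hg j) univ_nonempty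
  have hsplit : ∀ j, f j * lnα α (g j / f j) =
      f j * lnα α (G / F) + F * (G / F) ^ (1 - α) * (f j / F * lnα α (g j / G / (f j / F))) := by
    intro j
    have hratio : g j / f j = G / F * (g j / G / (f j / F)) := by
      field_simp [(hf j).ne', (hg j).ne']
    rw [hratio, lnα_mul α (div_pos hG hF) (div_pos (div_pos (hg j) hG) (div_pos (hf j) hF))]
    field_simp
  rw [← mul_div_rpow_one_sub hF hG]
  simp only [Dent, hsplit, sum_add_distrib, ← sum_mul, ← mul_sum]
  ring

theorem Dent_generalized_additivity_general (α : ℝ) (n m : ℕ)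
    (p q : Fin (n + 2) × Fin (m + 2) → ℝ)
    (hp : ∀ k, 0 < p k) (hq : ∀ k, 0 < q k) :
    Dent α p q =
      Dent α (fun i : Fin (n + 2) => ∑ j, p (i, j))
             (fun i : Fin (n + 2) => ∑ j, q (i, j))
      + ∑ i : Fin (n + 2),
          (∑ j, p (i, j)) ^ α * (∑ j, q (i, j)) ^ (1 - α) *
            Dent α (fun j : Fin (m + 2) => p (i, j) / ∑ j', p (i, j'))
                   (fun j : Fin (m + 2) => q (i, j) / ∑ j', q (i, j')) := by
  rw [Dent_prod, Dent, ← sum_neg_distrib, ← sum_add_distrib]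
  exact sum_congr rfl fun i _ =>
    Dent_eq_add_Dent_normalize α _ _ (fun j => hp (i, j)) (fun j => hq (i, j))

theorem Dent_generalized_additivity (α : ℝ) (n m : ℕ)
    (p q : Fin (n + 2) × Fin (m + 2) → ℝ)
    (hp : ∀ k, 0 < p k) (hq : ∀ k, 0 < q k)
    (hps : ∑ k, p k = 1) (hqs : ∑ k, q k = 1) :
    Dent α p q =
      Dent α (fun i : Fin (n + 2) => ∑ j, p (i, j))
             (fun i : Fin (n + 2) => ∑ j, q (i, j))
      + ∑ i : Fin (n + 2),
          (∑ j, p (i, j)) ^ α * (∑ j, q (i, j)) ^ (1 - α) *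
            Dent α (fun j : Fin (m + 2) => p (i, j) / ∑ j', p (i, j'))
                   (fun j : Fin (m + 2) => q (i, j) / ∑ j', q (i, j')) :=
  Dent_generalized_additivity_general α n m p q hp hq
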